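/- Let f₁, f₂, f₃, f₄ be the theta constants of the second kind f_a(Z) = θ[a,0](2Z) for a = (0,0), (1,0), (0,1), (1,1), define F₁ = f₁⁴+f₂⁴+f₃⁴+f₄⁴, F₂ = f₁²f₂²+f₃²f₄², F₃ = f₁²f₃²+f₂²f₄², F₄ = f₁²f₄²+f₂²f₃², F₅ = f₁f₂f₃f₄, and let F₆(Z) = θ[(0,0),(0,1)](Z)·θ[(0,0),(0,0)](Z)·θ[(0,0),(1,0)](Z)·θ[(0,0),(1,1)](Z). Then for every Z in the Siegel upper half space ℍ₂: F₆² = F₁² − 4F₂² − 4F₃² − 4F₄² + 32F₅². -/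

import Mathlib

/-!
Squaring `θ[0,b](Z)` and substituting `(g, h) = (m + n + a, m - n)`, which parametrizes `ℤ² × ℤ²`
bijectively by `a ∈ {0,1}²` and `m, n ∈ ℤ²`, the parallelogram law turns the double series into
`∑ₐ (-1)^(a·b) θ[a,0](2Z)²`. So each of the four factors of `F₆²` is a signed sum of `f₁², …, f₄²`,
and the relation becomes a polynomial identity in the `fᵢ`. The rearrangements are justified by
absolute convergence, which comes from `Im Z ≥ c • 1` for some `c > 0`.
-/

open Matrix Complex

/-- The Siegel upper half space of genus 2: symmetric complex 2×2 matrices with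
positive definite imaginary part. -/
def SiegelH2 : Set (Matrix (Fin 2) (Fin 2) ℂ) :=
  {Z | Z.IsSymm ∧ (Matrix.of fun i j => (Z i j).im).PosDef}

/-- The summand of the theta series with characteristic `(a,b)`:
`exp(πi((g+a/2)ᵀ Z (g+a/2) + bᵀ(g+a/2)))`. -/
noncomputable def thetaTerm (a b : Fin 2 → ℤ) (Z : Matrix (Fin 2) (Fin 2) ℂ)
    (g : Fin 2 → ℤ) : ℂ :=
  Complex.exp (Real.pi * Complex.I *
    ((∑ i, ∑ j, ((g i : ℂ) + (a i : ℂ) / 2) * Z i j * ((g j : ℂ) + (a j : ℂ) / 2)) +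
      ∑ i, (b i : ℂ) * ((g i : ℂ) + (a i : ℂ) / 2)))

/-- The theta constant `θ[a,b](Z) = Σ_{g∈ℤ²} exp(πi((g+a/2)ᵀ Z (g+a/2) + bᵀ(g+a/2)))`. -/
noncomputable def theta (a b : Fin 2 → ℤ) (Z : Matrix (Fin 2) (Fin 2) ℂ) : ℂ :=
  ∑' g : Fin 2 → ℤ, thetaTerm a b Z g

/-- The theta constants of the second kind `f_a(Z) = θ[a,0](2Z)`. -/
noncomputable def thetaSecond (a : Fin 2 → ℤ) (Z : Matrix (Fin 2) (Fin 2) ℂ) : ℂ :=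
  theta a 0 ((2 : ℂ) • Z)

/-- `f₁ = f_{(0,0)}`. -/
noncomputable def f₁ (Z : Matrix (Fin 2) (Fin 2) ℂ) : ℂ := thetaSecond ![0, 0] Z
/-- `f₂ = f_{(1,0)}`. -/
noncomputable def f₂ (Z : Matrix (Fin 2) (Fin 2) ℂ) : ℂ := thetaSecond ![1, 0] Z
/-- `f₃ = f_{(0,1)}`. -/
noncomputable def f₃ (Z : Matrix (Fin 2) (Fin 2) ℂ) : ℂ := thetaSecond ![0, 1] Z
/-- `f₄ = f_{(1,1)}`. -/
noncomputable def f₄ (Z : Matrix (Fin 2) (Fin 2) ℂ) : ℂ := thetaSecond ![1, 1] Z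

/-- Runge's generator `F₁ = f₁⁴+f₂⁴+f₃⁴+f₄⁴`. -/
noncomputable def F₁ (Z : Matrix (Fin 2) (Fin 2) ℂ) : ℂ :=
  f₁ Z ^ 4 + f₂ Z ^ 4 + f₃ Z ^ 4 + f₄ Z ^ 4
/-- Runge's generator `F₂ = f₁²f₂²+f₃²f₄²`. -/
noncomputable def F₂ (Z : Matrix (Fin 2) (Fin 2) ℂ) : ℂ :=
  f₁ Z ^ 2 * f₂ Z ^ 2 + f₃ Z ^ 2 * f₄ Z ^ 2
/-- Runge's generator `F₃ = f₁²f₃²+f₂²f₄²`. -/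
noncomputable def F₃ (Z : Matrix (Fin 2) (Fin 2) ℂ) : ℂ :=
  f₁ Z ^ 2 * f₃ Z ^ 2 + f₂ Z ^ 2 * f₄ Z ^ 2
/-- Runge's generator `F₄ = f₁²f₄²+f₂²f₃²`. -/
noncomputable def F₄ (Z : Matrix (Fin 2) (Fin 2) ℂ) : ℂ :=
  f₁ Z ^ 2 * f₄ Z ^ 2 + f₂ Z ^ 2 * f₃ Z ^ 2
/-- Runge's generator `F₅ = f₁f₂f₃f₄`. -/
noncomputable def F₅ (Z : Matrix (Fin 2) (Fin 2) ℂ) : ℂ :=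
  f₁ Z * f₂ Z * f₃ Z * f₄ Z

/-- `F₆ = Θ`, the product of the four theta constants of the standard syzygetic
quadruple. -/
noncomputable def F₆ (Z : Matrix (Fin 2) (Fin 2) ℂ) : ℂ :=
  theta ![0, 0] ![0, 1] Z * theta ![0, 0] ![0, 0] Z *
  theta ![0, 0] ![1, 0] Z * theta ![0, 0] ![1, 1] Z

lemma Matrix.PosDef.exists_pos_mul_sq_add_sq_le {Y : Matrix (Fin 2) (Fin 2) ℝ} (hY : Y.PosDef) :
    ∃ c > 0, ∀ v : Fin 2 → ℝ, c * (v 0 ^ 2 + v 1 ^ 2) ≤ ∑ i, ∑ j, v i * Y i j * v j := by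
  have hsymm : Y 1 0 = Y 0 1 := by simpa using hY.1.apply 0 1
  have hdet : 0 < Y 0 0 * Y 1 1 - Y 0 1 * Y 0 1 := by
    simpa [Matrix.det_fin_two, hsymm] using hY.det_pos
  have htr : 0 < Y 0 0 + Y 1 1 := add_pos hY.diag_pos hY.diag_pos
  refine ⟨(Y 0 0 * Y 1 1 - Y 0 1 * Y 0 1) / (Y 0 0 + Y 1 1), div_pos hdet htr, fun v => ?_⟩
  rw [div_mul_eq_mul_div, div_le_iff₀ htr]
  simp only [Fin.sum_univ_two, hsymm]
  -- Cayley–Hamilton: `(tr Y) vᵀYv - (det Y) ‖v‖² = ‖Yv‖²`.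
  nlinarith [sq_nonneg (Y 0 0 * v 0 + Y 0 1 * v 1), sq_nonneg (Y 0 1 * v 0 + Y 1 1 * v 1)]

lemma summable_exp_neg_mul_add_sq {t : ℝ} (ht : 0 < t) (s : ℝ) :
    Summable fun n : ℤ => Real.exp (-(t * (n + s) ^ 2)) := by
  have h := ((summable_jacobiTheta₂_term_iff ((t * s / Real.pi : ℝ) * I)
    ((t / Real.pi : ℝ) * I)).mpr (by simpa using div_pos ht Real.pi_pos)).norm.mul_left
    (Real.exp (-(t * s ^ 2)))
  refine h.congr fun n => ?_
  rw [norm_jacobiTheta₂_term, ← Real.exp_add, mul_I_im, mul_I_im, ofReal_re, ofReal_re]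
  congr 1
  field_simp
  ring

lemma norm_thetaTerm (a b : Fin 2 → ℤ) (Z : Matrix (Fin 2) (Fin 2) ℂ) (g : Fin 2 → ℤ) :
    ‖thetaTerm a b Z g‖ = Real.exp (-(Real.pi *
      ∑ i, ∑ j, ((g i : ℝ) + (a i : ℝ) / 2) * (Z i j).im * ((g j : ℝ) + (a j : ℝ) / 2))) := by
  have hreal : ∀ i, ((g i : ℂ) + (a i : ℂ) / 2) = (((g i : ℝ) + (a i : ℝ) / 2 : ℝ) : ℂ) := by
    intro i; push_cast; ring
  rw [thetaTerm, Complex.norm_exp]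
  congr 1
  simp only [hreal, Fin.sum_univ_two]
  simp [Complex.mul_re, Complex.mul_im]

lemma summable_norm_thetaTerm (a b : Fin 2 → ℤ) {Z : Matrix (Fin 2) (Fin 2) ℂ}
    (hZ : (Matrix.of fun i j => (Z i j).im).PosDef) :
    Summable fun g : Fin 2 → ℤ => ‖thetaTerm a b Z g‖ := by
  obtain ⟨c, hc, hquad⟩ := Matrix.PosDef.exists_pos_mul_sq_add_sq_le hZ
  have hπc : 0 < Real.pi * c := mul_pos Real.pi_pos hc
  have hprod := (summable_exp_neg_mul_add_sq hπc ((a 0 : ℝ) / 2)).mul_of_nonneg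
    (summable_exp_neg_mul_add_sq hπc ((a 1 : ℝ) / 2)) (fun _ => (Real.exp_pos _).le)
    (fun _ => (Real.exp_pos _).le)
  refine ((piFinTwoEquiv fun _ => ℤ).summable_iff.mpr hprod).of_nonneg_of_le
    (fun g => norm_nonneg _) (fun g => ?_)
  rw [norm_thetaTerm, Function.comp_apply, piFinTwoEquiv_apply, ← Real.exp_add, Real.exp_le_exp]
  have h := hquad fun i => (g i : ℝ) + (a i : ℝ) / 2
  simp only [Matrix.of_apply] at h
  nlinarith [mul_le_mul_of_nonneg_left h Real.pi_pos.le]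

lemma posDef_im_two_smul {Z : Matrix (Fin 2) (Fin 2) ℂ}
    (hZ : (Matrix.of fun i j => (Z i j).im).PosDef) :
    (Matrix.of fun i j => (((2 : ℂ) • Z) i j).im).PosDef := by
  convert hZ.smul (two_pos (α := ℝ)) using 1
  ext i j
  simp

def sumDiffEquiv (ι : Type*) : (ι → Fin 2) × (ι → ℤ) × (ι → ℤ) ≃ (ι → ℤ) × (ι → ℤ) where
  toFun w := (w.2.1 + w.2.2 + fun i => ((w.1 i : ℕ) : ℤ), w.2.1 - w.2.2)
  invFun x := (fun i => ⟨((x.1 i + x.2 i) % 2).toNat, by omega⟩,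
    fun i => (x.1 i + x.2 i - (x.1 i + x.2 i) % 2) / 2,
    fun i => (x.1 i - x.2 i - (x.1 i + x.2 i) % 2) / 2)
  left_inv := by
    rintro ⟨q, m, n⟩
    refine Prod.ext (funext fun i => Fin.ext ?_)
      (Prod.ext (funext fun i => ?_) (funext fun i => ?_))
    all_goals simp only [Pi.add_apply, Pi.sub_apply]; have := (q i).isLt; omega
  right_inv := by
    rintro ⟨x, y⟩
    refine Prod.ext (funext fun i => ?_) (funext fun i => ?_) <;>
      simp only [Pi.add_apply, Pi.sub_apply] <;> omega

lemma thetaTerm_mul_thetaTerm (a b : Fin 2 → ℤ) (Z : Matrix (Fin 2) (Fin 2) ℂ) (m n : Fin 2 → ℤ) :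
    thetaTerm 0 b Z (m + n + a) * thetaTerm 0 b Z (m - n) =
      (-1) ^ (∑ i, a i * b i) *
        (thetaTerm a 0 ((2 : ℂ) • Z) m * thetaTerm a 0 ((2 : ℂ) • Z) n) := by
  rw [← Complex.exp_pi_mul_I, ← Complex.exp_int_mul]
  simp only [thetaTerm, ← Complex.exp_add]
  -- With `u = m + a/2`, `v = n + a/2` the quadratic parts match by the parallelogram law
  -- `(u+v)ᵀZ(u+v) + (u-v)ᵀZ(u-v) = 2uᵀZu + 2vᵀZv`; the linear parts differ by `2bᵀm ∈ 2ℤ`.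
  refine Complex.exp_eq_exp_iff_exists_int.mpr ⟨∑ i, b i * m i, ?_⟩
  simp only [Fin.sum_univ_two, Pi.add_apply, Pi.sub_apply, Pi.zero_apply, Matrix.smul_apply,
    smul_eq_mul]
  push_cast
  ring

theorem theta_zero_sq_eq_sum (b : Fin 2 → ℤ) {Z : Matrix (Fin 2) (Fin 2) ℂ}
    (hZ : (Matrix.of fun i j => (Z i j).im).PosDef) :
    theta 0 b Z ^ 2 = ∑ q : Fin 2 → Fin 2,
      (-1) ^ (∑ i, ((q i : ℕ) : ℤ) * b i) * thetaSecond (fun i => q i) Z ^ 2 := by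
  set t := thetaTerm 0 b Z
  set T : (Fin 2 → ℤ) → (Fin 2 → ℤ) → ℂ := fun a => thetaTerm a 0 ((2 : ℂ) • Z)
  set E := sumDiffEquiv (Fin 2)
  have ht : Summable fun g => ‖t g‖ := summable_norm_thetaTerm 0 b hZ
  have hT : ∀ a, Summable fun g => ‖T a g‖ :=
    fun a => summable_norm_thetaTerm a 0 (posDef_im_two_smul hZ)
  have hsum : Summable fun w => t (E w).1 * t (E w).2 :=
    E.summable_iff.mpr (summable_mul_of_summable_norm ht ht)
  calc theta 0 b Z ^ 2 = ∑' p : (Fin 2 → ℤ) × (Fin 2 → ℤ), t p.1 * t p.2 := by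
        rw [theta, sq, tsum_mul_tsum_of_summable_norm ht ht]
    _ = ∑' w, t (E w).1 * t (E w).2 := (E.tsum_eq fun p => t p.1 * t p.2).symm
    _ = ∑ q, ∑' mn, t (E (q, mn)).1 * t (E (q, mn)).2 := by rw [hsum.tsum_prod, tsum_fintype]
    _ = ∑ q : Fin 2 → Fin 2, (-1) ^ (∑ i, ((q i : ℕ) : ℤ) * b i) *
          ∑' mn : (Fin 2 → ℤ) × (Fin 2 → ℤ), T (fun i => q i) mn.1 * T (fun i => q i) mn.2 := by
        refine Finset.sum_congr rfl fun q _ => ?_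
        rw [← tsum_mul_left]
        exact tsum_congr fun mn => thetaTerm_mul_thetaTerm _ b Z mn.1 mn.2
    _ = _ := by
        simp only [← tsum_mul_tsum_of_summable_norm (hT _) (hT _), thetaSecond, theta, sq]
        rfl

lemma theta_zero_sq_eq_f_sq (b : Fin 2 → ℤ) {Z : Matrix (Fin 2) (Fin 2) ℂ}
    (hZ : (Matrix.of fun i j => (Z i j).im).PosDef) :
    theta ![0, 0] b Z ^ 2 =
      f₁ Z ^ 2 + (-1) ^ b 0 * f₂ Z ^ 2 + (-1) ^ b 1 * f₃ Z ^ 2 + (-1) ^ (b 0 + b 1) * f₄ Z ^ 2 := by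
  have hchar : ∀ x y : Fin 2, (fun i => ((![x, y] i : ℕ) : ℤ)) = ![(x : ℤ), (y : ℤ)] := by
    intro x y; ext i; fin_cases i <;> rfl
  rw [show (![0, 0] : Fin 2 → ℤ) = 0 by simp, theta_zero_sq_eq_sum b hZ,
    ← (finTwoArrowEquiv (Fin 2)).symm.sum_comp, Fintype.sum_prod_type]
  simp only [finTwoArrowEquiv_symm_apply, Fin.sum_univ_two, cons_val_zero, cons_val_one,
    cons_val_fin_one, hchar, Fin.val_zero, Fin.val_one, Nat.cast_zero, Nat.cast_one, zero_mul,
    one_mul, add_zero, zero_add, zpow_zero, f₁, f₂, f₃, f₄]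
  ring

/-- The quadratic relation `F₆² = F₁² − 4F₂² − 4F₃² − 4F₄² + 32F₅²` holds at every
`Z ∈ ℍ₂`. -/
theorem stmt_14 (Z : Matrix (Fin 2) (Fin 2) ℂ) (hZ : Z ∈ SiegelH2) :
    F₆ Z ^ 2 = F₁ Z ^ 2 - 4 * F₂ Z ^ 2 - 4 * F₃ Z ^ 2 - 4 * F₄ Z ^ 2 + 32 * F₅ Z ^ 2 := by
  simp only [F₆, mul_pow, theta_zero_sq_eq_f_sq _ hZ.2]
  simp only [cons_val_zero, cons_val_one, zpow_zero, zpow_one, Int.reduceAdd,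
    even_two.neg_one_zpow, F₁, F₂, F₃, F₄, F₅]
  ring
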